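/- For all complex numbers z with |z| ≤ 1, Σ_{m=0}^{∞} e_{E,m} z^m = Π_p (1 + (z−1)/(p(p+1))), the product running over all primes p. -/

import Mathlib

open scoped BigOperators

/-! The function `n ↦ [n powerful] z ^ ω_E(n) eWeight n` is multiplicative, and for `‖z‖ ≤ 1` it
is bounded by `1 / n` on powerful numbers, which are all of the form `a² b³`; so its series
converges absolutely. Its Euler factor at `p` is
`1 + p/(p+1) · (z/p² + 1/p³ + z/p⁴ + 1/p⁵ + ⋯) = (1 - p⁻²)⁻¹ (1 + (z - 1)/(p(p+1)))`,
and `∏ (1 - p⁻²) = ζ(2)⁻¹ = 6/π²` cancels the first factor. Grouping the same series by the value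
of `ω_E` gives `(π²/6) ∑ e_{E,m} z^m`. -/

/-- A positive integer is *powerful* if every prime dividing it divides it with
multiplicity at least `2`. -/
def Powerful (f : ℕ) : Prop := 0 < f ∧ ∀ p : ℕ, p.Prime → p ∣ f → p ^ 2 ∣ f

/-- `ω_E(n)`: the number of primes dividing `n` with even multiplicity
(necessarily at least `2`). -/
def omegaE (n : ℕ) : ℕ :=
  (n.primeFactors.filter fun p => Even (n.factorization p)).card

/-- The density `e_{E,m}` of integers `n` with `ω_E(n) = m`. -/
noncomputable def eEm (m : ℕ) : ℝ :=
  6 / Real.pi ^ 2 *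
    ∑' f : {f : ℕ // Powerful f ∧ omegaE f = m},
      ((f : ℕ) : ℝ)⁻¹ * ∏ p ∈ (f : ℕ).primeFactors, (1 + 1 / (p : ℝ))⁻¹


lemma powerful_one : Powerful 1 :=
  ⟨one_pos, fun _ hp hd => absurd (Nat.dvd_one.mp hd ▸ hp) Nat.not_prime_one⟩

lemma Nat.Coprime.powerful_mul_iff {m n : ℕ} (h : m.Coprime n) :
    Powerful (m * n) ↔ Powerful m ∧ Powerful n := by
  constructor
  · rintro ⟨hpos, hdvd⟩
    refine ⟨⟨Nat.pos_of_mul_pos_right hpos, fun p hp hd => ?_⟩,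
      ⟨Nat.pos_of_mul_pos_left hpos, fun p hp hd => ?_⟩⟩
    · exact ((h.coprime_dvd_left hd).pow_left 2).dvd_of_dvd_mul_right
        (hdvd p hp (dvd_mul_of_dvd_left hd n))
    · exact ((h.coprime_dvd_right hd).pow_right 2).symm.dvd_of_dvd_mul_left
        (hdvd p hp (dvd_mul_of_dvd_right hd m))
  · rintro ⟨⟨hm, hdm⟩, ⟨hn, hdn⟩⟩
    refine ⟨Nat.mul_pos hm hn, fun p hp hd => ?_⟩
    rcases hp.dvd_mul.mp hd with hd | hd
    · exact dvd_mul_of_dvd_left (hdm p hp hd) n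
    · exact dvd_mul_of_dvd_right (hdn p hp hd) m

lemma powerful_prime_pow_iff {p e : ℕ} (hp : p.Prime) : Powerful (p ^ e) ↔ e ≠ 1 := by
  refine ⟨?_, fun he => ⟨pow_pos hp.pos e, fun q hq hd => ?_⟩⟩
  · rintro ⟨-, h⟩ rfl
    have := Nat.le_of_dvd hp.pos (by simpa using h p hp (by simp))
    nlinarith [hp.two_le]
  · obtain rfl := (Nat.prime_dvd_prime_iff_eq hq hp).mp (hq.dvd_of_dvd_pow hd)
    rcases Nat.eq_zero_or_pos e with rfl | he0
    · exact absurd (Nat.dvd_one.mp (by simpa using hd)) hq.ne_one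
    · exact pow_dvd_pow q (by omega)

lemma Powerful.exists_eq_sq_mul_cube {n : ℕ} (hn : Powerful n) :
    ∃ a b : ℕ, n = a ^ 2 * b ^ 3 := by
  obtain ⟨b, a, rfl, hb⟩ := Nat.sq_mul_squarefree n
  suffices b ∣ a by
    obtain ⟨c, rfl⟩ := this
    exact ⟨c, b, by ring⟩
  -- a prime `p ∣ b` with `p ∤ a` would give `p ^ 2 ∣ b`, against squarefreeness
  rw [← Nat.prod_primeFactors_of_squarefree hb]
  refine Finset.prod_primes_dvd a (fun p hp => (Nat.prime_of_mem_primeFactors hp).prime)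
    fun p hp => ?_
  have hp' := Nat.prime_of_mem_primeFactors hp
  have hpb := Nat.dvd_of_mem_primeFactors hp
  by_contra hpa
  have hcop : (p ^ 2).Coprime (a ^ 2) := ((hp'.coprime_iff_not_dvd.mpr hpa).pow 2 2)
  have : p ^ 2 ∣ b := hcop.dvd_of_dvd_mul_left (hn.2 p hp' (dvd_mul_of_dvd_right hpb _))
  exact hp'.one_lt.ne' (Nat.isUnit_iff.mp (hb p (by simpa [sq] using this)))

lemma summable_inv_powerful :
    Summable fun n : {n : ℕ // Powerful n} => ((n : ℕ) : ℝ)⁻¹ := by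
  choose a b hab using fun n : {n : ℕ // Powerful n} => n.2.exists_eq_sq_mul_cube
  have hinj : Function.Injective fun n => (a n, b n) := fun m n h => by
    simp only [Prod.mk.injEq] at h
    exact Subtype.ext (by rw [hab m, hab n, h.1, h.2])
  -- at `a = 0` or `b = 0` the summand below is `0⁻¹ = 0`
  have hprod : Summable fun ab : ℕ × ℕ => ((ab.1 : ℝ) ^ 2)⁻¹ * ((ab.2 : ℝ) ^ 3)⁻¹ :=
    (Real.summable_nat_pow_inv.mpr one_lt_two).mul_of_nonneg
      (Real.summable_nat_pow_inv.mpr (by norm_num)) (fun _ => by positivity)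
      (fun _ => by positivity)
  refine (hprod.comp_injective hinj).congr fun n => ?_
  simp [hab n, mul_comm]

lemma omegaE_one : omegaE 1 = 0 := by simp [omegaE]

lemma Nat.Coprime.omegaE_mul {m n : ℕ} (h : m.Coprime n) :
    omegaE (m * n) = omegaE m + omegaE n := by
  unfold omegaE
  rw [h.primeFactors_mul, Finset.filter_union,
    Finset.card_union_of_disjoint (Finset.disjoint_filter_filter h.disjoint_primeFactors)]
  congr 1 <;> congr 1 <;> refine Finset.filter_congr fun p hp => ?_ <;>
    rw [Nat.factorization_mul_apply_of_coprime h]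
  · rw [Nat.factorization_eq_zero_of_not_dvd fun hpn =>
      (Nat.prime_of_mem_primeFactors hp).one_lt.ne'
        (Nat.eq_one_of_dvd_coprimes h (Nat.dvd_of_mem_primeFactors hp) hpn), add_zero]
  · rw [Nat.factorization_eq_zero_of_not_dvd fun hpm =>
      (Nat.prime_of_mem_primeFactors hp).one_lt.ne'
        (Nat.eq_one_of_dvd_coprimes h hpm (Nat.dvd_of_mem_primeFactors hp)), zero_add]

lemma omegaE_prime_pow {p e : ℕ} (hp : p.Prime) (he : e ≠ 0) :
    omegaE (p ^ e) = if Even e then 1 else 0 := by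
  rw [omegaE, Nat.primeFactors_pow p he, hp.primeFactors, hp.factorization_pow]
  split_ifs with h <;> simp [h, Finset.filter_singleton]

/-- `(6 / π ^ 2) * eWeight f` is the density of the integers whose powerful part is `f`. -/
noncomputable def eWeight (n : ℕ) : ℝ :=
  (n : ℝ)⁻¹ * ∏ p ∈ n.primeFactors, (1 + 1 / (p : ℝ))⁻¹

lemma eWeight_nonneg (n : ℕ) : 0 ≤ eWeight n := by
  unfold eWeight; positivity

lemma eWeight_le_inv (n : ℕ) : eWeight n ≤ (n : ℝ)⁻¹ :=
  mul_le_of_le_one_right (by positivity) <| Finset.prod_le_one (fun _ _ => by positivity)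
    fun p _ => inv_le_one_of_one_le₀ (le_add_of_nonneg_right (by positivity))

lemma Nat.Coprime.eWeight_mul {m n : ℕ} (h : m.Coprime n) :
    eWeight (m * n) = eWeight m * eWeight n := by
  rw [eWeight, h.primeFactors_mul, Finset.prod_union h.disjoint_primeFactors, Nat.cast_mul,
    mul_inv, eWeight, eWeight]
  ring

lemma eWeight_prime_pow {p e : ℕ} (hp : p.Prime) (he : e ≠ 0) :
    eWeight (p ^ e) = (1 + 1 / (p : ℝ))⁻¹ * ((p : ℝ) ^ e)⁻¹ := by
  rw [eWeight, Nat.primeFactors_pow p he, hp.primeFactors, Finset.prod_singleton, Nat.cast_pow,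
    mul_comm]

lemma summable_eWeight_powerful : Summable fun n : {n : ℕ // Powerful n} => eWeight n :=
  summable_inv_powerful.of_nonneg_of_le (fun _ => eWeight_nonneg _) fun _ => eWeight_le_inv _

open Classical in
noncomputable def eTerm (z : ℂ) (n : ℕ) : ℂ :=
  if Powerful n then z ^ omegaE n * eWeight n else 0

lemma eTerm_of_powerful {z : ℂ} {n : ℕ} (hn : Powerful n) :
    eTerm z n = z ^ omegaE n * eWeight n := if_pos hn

lemma eTerm_of_not_powerful {z : ℂ} {n : ℕ} (hn : ¬ Powerful n) : eTerm z n = 0 := if_neg hn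

lemma eTerm_zero (z : ℂ) : eTerm z 0 = 0 :=
  eTerm_of_not_powerful fun h => h.1.false

lemma eTerm_one (z : ℂ) : eTerm z 1 = 1 := by
  simp [eTerm_of_powerful powerful_one, omegaE_one, eWeight]

lemma Nat.Coprime.eTerm_mul (z : ℂ) {m n : ℕ} (h : m.Coprime n) :
    eTerm z (m * n) = eTerm z m * eTerm z n := by
  by_cases hm : Powerful m
  · by_cases hn : Powerful n
    · rw [eTerm_of_powerful (h.powerful_mul_iff.mpr ⟨hm, hn⟩), eTerm_of_powerful hm,
        eTerm_of_powerful hn, h.omegaE_mul, h.eWeight_mul]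
      push_cast
      ring
    · rw [eTerm_of_not_powerful hn,
        eTerm_of_not_powerful fun h' => hn (h.powerful_mul_iff.mp h').2, mul_zero]
  · rw [eTerm_of_not_powerful hm, eTerm_of_not_powerful fun h' => hm (h.powerful_mul_iff.mp h').1,
      zero_mul]

lemma norm_eTerm_le {z : ℂ} (hz : ‖z‖ ≤ 1) (n : ℕ) :
    ‖eTerm z n‖ ≤ {n | Powerful n}.indicator eWeight n := by
  by_cases hn : Powerful n
  · rw [Set.indicator_of_mem (s := {n | Powerful n}) hn, eTerm_of_powerful hn, norm_mul,
      norm_pow, Complex.norm_real, Real.norm_of_nonneg (eWeight_nonneg n)]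
    exact mul_le_of_le_one_left (eWeight_nonneg n) (pow_le_one₀ (norm_nonneg z) hz)
  · simp [eTerm_of_not_powerful hn, Set.indicator_of_notMem (s := {n | Powerful n}) hn]

lemma summable_norm_eTerm {z : ℂ} (hz : ‖z‖ ≤ 1) : Summable fun n => ‖eTerm z n‖ :=
  ((summable_subtype_iff_indicator (f := eWeight) (s := {n | Powerful n})).mp
    summable_eWeight_powerful).of_nonneg_of_le (fun _ => norm_nonneg _) (norm_eTerm_le hz)

lemma eTerm_prime_pow_add_two (z : ℂ) {p : ℕ} (hp : p.Prime) (e : ℕ) :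
    eTerm z (p ^ (e + 2)) =
      z ^ (if Even e then 1 else 0) * ((1 + 1 / (p : ℂ))⁻¹ * ((p : ℂ) ^ (e + 2))⁻¹) := by
  rw [eTerm_of_powerful ((powerful_prime_pow_iff hp).mpr (by omega)),
    omegaE_prime_pow hp (by omega), eWeight_prime_pow hp (by omega)]
  simp [Nat.even_add]

lemma one_sub_inv_sq_ne_zero {p : ℕ} (hp : 1 < p) : 1 - ((p : ℂ) ^ 2)⁻¹ ≠ 0 :=
  sub_ne_zero.mpr (Ne.symm (inv_ne_one.mpr (by exact_mod_cast (Nat.one_lt_pow two_ne_zero hp).ne')))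

lemma hasSum_eTerm_prime_pow_add_two (z : ℂ) {p : ℕ} (hp : p.Prime) :
    HasSum (fun e => eTerm z (p ^ (e + 2)))
      ((1 + 1 / (p : ℂ))⁻¹ * ((p : ℂ) ^ 2)⁻¹ * (z + (p : ℂ)⁻¹) *
        (1 - ((p : ℂ) ^ 2)⁻¹)⁻¹) := by
  set q : ℂ := ((p : ℂ) ^ 2)⁻¹ with hq_def
  set c : ℂ := (1 + 1 / (p : ℂ))⁻¹ with hc_def
  have hq : ‖q‖ < 1 := by
    rw [hq_def, norm_inv, norm_pow, Complex.norm_natCast]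
    exact inv_lt_one_of_one_lt₀ (one_lt_pow₀ (by exact_mod_cast hp.one_lt) two_ne_zero)
  have hgeo := hasSum_geometric_of_norm_lt_one hq
  have heven : HasSum (fun k => eTerm z (p ^ (2 * k + 2))) (z * c * q * (1 - q)⁻¹) := by
    have h k : eTerm z (p ^ (2 * k + 2)) = z * c * q * q ^ k := by
      rw [eTerm_prime_pow_add_two z hp, if_pos (even_two_mul k), hq_def, hc_def]
      ring
    simpa only [h] using hgeo.mul_left (z * c * q)
  have hodd : HasSum (fun k => eTerm z (p ^ (2 * k + 1 + 2)))
      (c * q * (p : ℂ)⁻¹ * (1 - q)⁻¹) := by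
    have h k : eTerm z (p ^ (2 * k + 1 + 2)) = c * q * (p : ℂ)⁻¹ * q ^ k := by
      rw [eTerm_prime_pow_add_two z hp, if_neg (Nat.not_even_two_mul_add_one k), hq_def, hc_def]
      ring
    simpa only [h] using hgeo.mul_left (c * q * (p : ℂ)⁻¹)
  convert HasSum.even_add_odd (f := fun e => eTerm z (p ^ (e + 2))) heven hodd using 1
  ring

lemma hasSum_eTerm_prime_pow (z : ℂ) {p : ℕ} (hp : p.Prime) :
    HasSum (fun e => eTerm z (p ^ e))
      ((1 - ((p : ℂ) ^ 2)⁻¹)⁻¹ * (1 + (z - 1) / ((p : ℂ) * ((p : ℂ) + 1)))) := by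
  have hp1 : eTerm z p = 0 :=
    eTerm_of_not_powerful fun h => (powerful_prime_pow_iff (e := 1) hp).mp (by rwa [pow_one]) rfl
  have hp0 : (p : ℂ) ≠ 0 := Nat.cast_ne_zero.mpr hp.ne_zero
  have hpp1 : (p : ℂ) + 1 ≠ 0 := by exact_mod_cast Nat.succ_ne_zero p
  have hpp2 : (p : ℂ) ^ 2 - 1 ≠ 0 :=
    sub_ne_zero.mpr (by exact_mod_cast (Nat.one_lt_pow two_ne_zero hp.one_lt).ne')
  have hval : (1 + 1 / (p : ℂ))⁻¹ * ((p : ℂ) ^ 2)⁻¹ * (z + (p : ℂ)⁻¹) *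
      (1 - ((p : ℂ) ^ 2)⁻¹)⁻¹ + ∑ e ∈ Finset.range 2, eTerm z (p ^ e) =
      (1 - ((p : ℂ) ^ 2)⁻¹)⁻¹ * (1 + (z - 1) / ((p : ℂ) * ((p : ℂ) + 1))) := by
    rw [Finset.sum_range_succ, Finset.sum_range_one, pow_zero, pow_one, eTerm_one, hp1]
    field_simp
    ring
  rw [← hval]
  exact (hasSum_nat_add_iff (f := fun e => eTerm z (p ^ e)) 2).mp
    (hasSum_eTerm_prime_pow_add_two z hp)

lemma hasProd_one_sub_inv_sq :
    HasProd (fun p : Nat.Primes => 1 - (((p : ℕ) : ℂ) ^ 2)⁻¹) (6 / (Real.pi : ℂ) ^ 2) := by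
  have h := (riemannZeta_eulerProduct_hasProd (s := 2) (by norm_num)).inv₀
    (riemannZeta_ne_zero_of_one_lt_re (by norm_num))
  have h2 : (-2 : ℂ) = -((2 : ℕ) : ℂ) := by norm_num
  simpa only [inv_inv, riemannZeta_two, inv_div, h2, Complex.cpow_neg, Complex.cpow_natCast]
    using h

def powerfulSigmaEquiv :
    (Σ m : ℕ, {f : ℕ // Powerful f ∧ omegaE f = m}) ≃ {n : ℕ // Powerful n} where
  toFun x := ⟨x.2, x.2.2.1⟩
  invFun n := ⟨omegaE n, n, n.2, rfl⟩
  left_inv := by rintro ⟨m, f, hf, rfl⟩; rfl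
  right_inv _ := rfl

lemma hasSum_pow_mul_tsum_eWeight {z : ℂ} (hz : ‖z‖ ≤ 1) :
    HasSum (fun m => z ^ m * ∑' f : {f : ℕ // Powerful f ∧ omegaE f = m}, (eWeight f : ℂ))
      (∑' n, eTerm z n) := by
  have hsupp : Function.support (eTerm z) ⊆ {n | Powerful n} := fun n hn =>
    by_contra fun h => hn (eTerm_of_not_powerful h)
  have hpow : HasSum (fun n : {n : ℕ // Powerful n} => eTerm z n) (∑' n, eTerm z n) :=
    (hasSum_subtype_iff_of_support_subset hsupp).mpr (summable_norm_eTerm hz).of_norm.hasSum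
  refine (powerfulSigmaEquiv.hasSum_iff.mpr hpow).sigma fun m => ?_
  have hfib : Summable fun f : {f : ℕ // Powerful f ∧ omegaE f = m} => eWeight f :=
    (summable_eWeight_powerful.comp_injective powerfulSigmaEquiv.injective).sigma_factor m
  have h (f : {f : ℕ // Powerful f ∧ omegaE f = m}) : eTerm z f = z ^ m * eWeight f := by
    rw [eTerm_of_powerful f.2.1, f.2.2]
  show HasSum (fun f : {f : ℕ // Powerful f ∧ omegaE f = m} => eTerm z f) _
  simpa only [h, Complex.ofReal_tsum] using
    (Complex.hasSum_ofReal.mpr hfib.hasSum).mul_left (z ^ m)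

lemma ofReal_eEm (m : ℕ) :
    (eEm m : ℂ) = 6 / (Real.pi : ℂ) ^ 2 *
      ∑' f : {f : ℕ // Powerful f ∧ omegaE f = m}, (eWeight f : ℂ) := by
  rw [eEm, Complex.ofReal_mul, Complex.ofReal_tsum, Complex.ofReal_div, Complex.ofReal_pow,
    Complex.ofReal_ofNat]
  rfl

theorem eEm_generating_function (z : ℂ) (hz : ‖z‖ ≤ 1) :
    ∃ P : ℂ,
      HasProd (fun p : Nat.Primes =>
        1 + (z - 1) / (((p : ℕ) : ℂ) * (((p : ℕ) : ℂ) + 1))) P ∧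
      HasSum (fun m : ℕ => (eEm m : ℂ) * z ^ m) P := by
  have hEuler := EulerProduct.eulerProduct_hasProd (eTerm_one z) (fun h => h.eTerm_mul z)
    (summable_norm_eTerm hz) (eTerm_zero z)
  simp only [fun p : Nat.Primes => (hasSum_eTerm_prime_pow z p.2).tsum_eq] at hEuler
  refine ⟨6 / (Real.pi : ℂ) ^ 2 * ∑' n, eTerm z n, ?_, ?_⟩
  · simpa only [fun p : Nat.Primes => mul_inv_cancel_left₀ (one_sub_inv_sq_ne_zero p.2.one_lt)]
      using hasProd_one_sub_inv_sq.mul hEuler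
  · have h m : (eEm m : ℂ) * z ^ m = 6 / (Real.pi : ℂ) ^ 2 *
        (z ^ m * ∑' f : {f : ℕ // Powerful f ∧ omegaE f = m}, (eWeight f : ℂ)) := by
      rw [ofReal_eEm]
      ring
    simpa only [h] using (hasSum_pow_mul_tsum_eWeight hz).mul_left (6 / (Real.pi : ℂ) ^ 2)
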